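/- arXiv:2204.00509 — 4 statements merged into one kernel-verified Lean document; each statement's English description precedes it below -/
import Mathlib

section
/- For every natural number l, as h → 0 through nonzero complex values, (1/h³)·Γ(3h - 3l - 2) / (Γ(h - l)⁴ · Γ(l + 2 - h)) converges to (-1)^l · (l!)⁴ / (3 · (3l+2)! · (l+1)!). In particular the function h ↦ Γ(3h - 3l - 2) / (Γ(h - l)⁴ · Γ(l + 2 - h)) vanishes to order 3 at h = 0, i.e. dividing it by h² still gives a function tending to 0 as h → 0, h ≠ 0. -/
/-!
Near `h = 0` the factors `Γ(3h - 3l - 2)` and `Γ(h - l)` sit at simple poles of `Γ`, while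
`Γ(l + 2 - h)` is regular. Since `Γ` has residue `(-1)ⁿ / n!` at `-n`, the numerator grows like
`1 / h` and the denominator like `1 / h⁴`, so the quotient vanishes to order exactly three.
-/

open Filter Topology Complex

theorem Complex.tendsto_self_mul_Gamma_sub_nat (n : ℕ) :
    Tendsto (fun z : ℂ => z * Gamma (z - n)) (𝓝[≠] 0) (𝓝 ((-1) ^ n / n.factorial)) := by
  induction n with
  | zero => simpa using tendsto_self_mul_Gamma_nhds_zero
  | succ n ih =>
    have hn : (0 : ℂ) - (n + 1) ≠ 0 := by
      rw [zero_sub, neg_ne_zero]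
      exact Nat.cast_add_one_ne_zero n
    have hlin : Tendsto (fun z : ℂ => z - (n + 1)) (𝓝[≠] 0) (𝓝 (0 - (n + 1))) :=
      ((continuous_sub_right _).tendsto 0).mono_left nhdsWithin_le_nhds
    have hshift : ∀ᶠ z in 𝓝[≠] (0 : ℂ),
        z * Gamma (z - n) / (z - (n + 1)) = z * Gamma (z - ↑(n + 1)) := by
      filter_upwards [hlin.eventually_ne hn] with z hz
      have hrec := Gamma_add_one (z - (n + 1)) hz
      rw [show z - (n + 1) + 1 = z - n by ring] at hrec
      rw [hrec, Nat.cast_succ]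
      field_simp
    convert (ih.div hlin hn).congr' hshift using 2
    have hfact : (n.factorial : ℂ) ≠ 0 := Nat.cast_ne_zero.mpr n.factorial_ne_zero
    rw [pow_succ, Nat.factorial_succ, zero_sub]
    push_cast
    field_simp

theorem Complex.tendsto_self_mul_Gamma_const_mul_sub_nat {c : ℂ} (hc : c ≠ 0) (n : ℕ) :
    Tendsto (fun z : ℂ => z * Gamma (c * z - n)) (𝓝[≠] 0)
      (𝓝 ((-1) ^ n / (c * n.factorial))) := by
  have hscale : Tendsto (fun z : ℂ => c * z) (𝓝[≠] 0) (𝓝[≠] 0) := by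
    refine tendsto_nhdsWithin_of_tendsto_nhds_of_eventually_within _ ?_ ?_
    · exact ((continuous_const_smul c).tendsto' 0 0 (mul_zero c)).mono_left nhdsWithin_le_nhds
    · filter_upwards [self_mem_nhdsWithin] with z hz using mul_ne_zero hc hz
  convert ((tendsto_self_mul_Gamma_sub_nat n).comp hscale).const_mul c⁻¹ using 1
  · ext z
    simp only [Function.comp_apply]
    field_simp
  · field_simp

theorem Complex.tendsto_Gamma_nat_add_two_sub (l : ℕ) :
    Tendsto (fun h : ℂ => Gamma ((l : ℂ) + 2 - h)) (𝓝 0) (𝓝 (l + 1).factorial) := by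
  have hcont := (differentiableAt_Gamma_nat_add_one (l + 1)).continuousAt.tendsto
  rw [Gamma_nat_eq_factorial] at hcont
  refine hcont.comp ?_
  convert (continuous_sub_left ((l : ℂ) + 2)).tendsto 0 using 2
  push_cast
  ring

theorem neg_one_pow_three_mul_add_two {R : Type*} [Monoid R] [HasDistribNeg R] (l : ℕ) :
    (-1 : R) ^ (3 * l + 2) = (-1) ^ l := by
  rw [show 3 * l + 2 = l + 2 * (l + 1) by ring, pow_add, pow_mul, neg_one_sq, one_pow, mul_one]

theorem tendsto_div_sq_of_tendsto_one_div_pow_three_mul {𝕜 : Type*} [NormedField 𝕜]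
    {f : 𝕜 → 𝕜} {L : 𝕜} (hf : Tendsto (fun h => (1 / h ^ 3) * f h) (𝓝[≠] 0) (𝓝 L)) :
    Tendsto (fun h => f h / h ^ 2) (𝓝[≠] 0) (𝓝 0) := by
  have hid : Tendsto (fun h : 𝕜 => h) (𝓝[≠] 0) (𝓝 0) := tendsto_id.mono_left nhdsWithin_le_nhds
  have hlim := hid.mul hf
  rw [zero_mul] at hlim
  refine hlim.congr' ?_
  filter_upwards [self_mem_nhdsWithin] with h hh
  field_simp

/-- For every `l : ℕ`, as `h → 0`, `h ≠ 0`, one has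
`(1/h³)·Γ(3h - 3l - 2) / (Γ(h - l)⁴ · Γ(l + 2 - h)) → (-1)^l · (l!)⁴ / (3·(3l+2)!·(l+1)!)`;
in particular the Gamma quotient divided by `h²` still tends to `0`. -/
theorem cubic_residue_vanishes_to_order_three (l : ℕ) :
    Tendsto
      (fun h : ℂ => (1 / h ^ 3) *
        (Complex.Gamma (3 * h - 3 * (l : ℂ) - 2) /
          (Complex.Gamma (h - (l : ℂ)) ^ 4 * Complex.Gamma ((l : ℂ) + 2 - h))))
      (𝓝[≠] (0 : ℂ))
      (𝓝 ((-1 : ℂ) ^ l * (Nat.factorial l : ℂ) ^ 4 /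
        (3 * (Nat.factorial (3 * l + 2) : ℂ) * (Nat.factorial (l + 1) : ℂ)))) ∧
    Tendsto
      (fun h : ℂ =>
        (Complex.Gamma (3 * h - 3 * (l : ℂ) - 2) /
          (Complex.Gamma (h - (l : ℂ)) ^ 4 * Complex.Gamma ((l : ℂ) + 2 - h))) / h ^ 2)
      (𝓝[≠] (0 : ℂ)) (𝓝 (0 : ℂ)) := by
  have hnum := tendsto_self_mul_Gamma_const_mul_sub_nat three_ne_zero (3 * l + 2)
  have hpole := tendsto_self_mul_Gamma_sub_nat l
  have hreg := tendsto_nhdsWithin_of_tendsto_nhds (tendsto_Gamma_nat_add_two_sub l) (s := {0}ᶜ)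
  have hval : (-1 : ℂ) ^ (3 * l + 2) / (3 * (3 * l + 2).factorial) /
      (((-1) ^ l / l.factorial) ^ 4 * (l + 1).factorial) =
      (-1) ^ l * (l.factorial : ℂ) ^ 4 / (3 * (3 * l + 2).factorial * (l + 1).factorial) := by
    rw [neg_one_pow_three_mul_add_two, div_pow, ← pow_mul,
      Even.neg_one_pow (n := l * 4) ⟨2 * l, by ring⟩]
    field_simp
  have hquot := hnum.div (hpole.pow 4 |>.mul hreg) (by simp [Nat.factorial_ne_zero])
  rw [hval] at hquot
  have hmain : Tendsto (fun h : ℂ => (1 / h ^ 3) *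
        (Gamma (3 * h - 3 * (l : ℂ) - 2) / (Gamma (h - (l : ℂ)) ^ 4 * Gamma ((l : ℂ) + 2 - h))))
      (𝓝[≠] 0) (𝓝 _) := hquot.congr' <| by
    filter_upwards [self_mem_nhdsWithin] with h hh
    push_cast
    rw [Pi.div_apply, mul_pow, sub_sub]
    field_simp
  exact ⟨hmain, tendsto_div_sq_of_tendsto_one_div_pow_three_mul hmain⟩
end

section
/- Let N ≥ 1 be an integer, let w₁, …, w_N and d be positive integers, set d' = (w₁ + ⋯ + w_N) - d, and assume d' ≥ 1. Let l be a natural number. Then, as h → 0 through nonzero complex values, (1/h^(N-1)) · Γ(1 + d·h - d(l+1)) / ( Γ(1 + d'(l+1) - d'·h) · ∏_{i=1}^N Γ(1 + wᵢ·h - wᵢ(l+1)) ) converges to [ (-1)^(d(l+1)-1) / ( d · (d(l+1)-1)! · (d'(l+1))! ) ] · ∏_{i=1}^N (-1)^(wᵢ(l+1)-1) · wᵢ · (wᵢ(l+1)-1)!. In particular, dividing the same expression by h^(N-2) gives a function tending to 0 as h → 0, h ≠ 0. -/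
/-!
Each factor `Γ(1 + m h - k)` with `m ≠ 0` and `k ≥ 1` has a simple pole at `h = 0`: writing
`Γ(z) = Γ(z - n) · (z - n)ₙ` (rising factorial), the residue `z Γ(z) → 1` of `Γ` at `0` gives
`z Γ(z - n) → 1 / (-n)ₙ = 1 / ((-1)ⁿ n!)`, and rescaling `z = m h` divides the residue by `m`.
The factor `Γ(1 + d'(l+1) - d'h)` is regular with value `(d'(l+1))!`. The numerator thus has one
simple pole and the denominator `N` of them, so the quotient is `h^(N-1)` times a function with a
finite limit, and one more power of `h` sends it to `0`.
-/

open Filter Topology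

theorem ascPochhammer_eval_neg_natCast_self (R : Type*) [CommRing R] (n : ℕ) :
    (ascPochhammer R n).eval (-(n : R)) = (-1) ^ n * n.factorial := by
  rw [ascPochhammer_eval_neg_eq_descPochhammer, descPochhammer_eval_eq_descFactorial,
    Nat.descFactorial_self]

namespace Complex

theorem Gamma_mul_ascPochhammer_sub_natCast {z : ℂ} (n : ℕ) (hz : ∀ k : ℤ, z ≠ k) :
    Gamma (z - n) * (ascPochhammer ℂ n).eval (z - n) = Gamma z := by
  have hzn : ∀ k : ℕ, z - n ≠ -k := fun k h => hz (n - k) (by push_cast; linear_combination h)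
  rw [← Gamma_add_nat_div_Gamma_eq _ hzn, sub_add_cancel, mul_div_cancel₀ _ (Gamma_ne_zero hzn)]

theorem eventually_nhdsNE_zero_ne_intCast : ∀ᶠ z : ℂ in 𝓝[≠] 0, ∀ k : ℤ, z ≠ k := by
  filter_upwards [eventually_nhdsWithin_of_eventually_nhds (Metric.ball_mem_nhds 0 one_pos),
    self_mem_nhdsWithin] with z hz hz0 k rfl
  have hk : |(k : ℝ)| < 1 := by simpa using hz
  exact hz0 (by simp [Int.abs_lt_one_iff.mp (by exact_mod_cast hk)])

theorem tendsto_self_mul_Gamma_sub_natCast (n : ℕ) :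
    Tendsto (fun z : ℂ => z * Gamma (z - n)) (𝓝[≠] 0) (𝓝 ((-1) ^ n * n.factorial)⁻¹) := by
  have hpoch : Tendsto (fun z : ℂ => (ascPochhammer ℂ n).eval (z - n)) (𝓝[≠] 0)
      (𝓝 ((-1) ^ n * n.factorial)) := by
    rw [← ascPochhammer_eval_neg_natCast_self, ← zero_sub]
    exact ((Polynomial.continuous _).comp (continuous_sub_right _)).continuousAt.tendsto.mono_left
      nhdsWithin_le_nhds
  have hlim := tendsto_self_mul_Gamma_nhds_zero.div hpoch (by simp [Nat.factorial_ne_zero])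
  rw [one_div] at hlim
  refine hlim.congr' ?_
  filter_upwards [eventually_nhdsNE_zero_ne_intCast] with z hz
  have hΓ := Gamma_mul_ascPochhammer_sub_natCast n hz
  have hP : (ascPochhammer ℂ n).eval (z - n) ≠ 0 :=
    right_ne_zero_of_mul (hΓ ▸ Gamma_ne_zero fun k h => hz (-k) (by simpa using h))
  rw [Pi.div_apply, ← hΓ, ← mul_assoc, mul_div_cancel_right₀ _ hP]

theorem tendsto_self_mul_Gamma_mul_sub_natCast {m : ℂ} (hm : m ≠ 0) (n : ℕ) :
    Tendsto (fun h : ℂ => h * Gamma (m * h - n)) (𝓝[≠] 0)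
      (𝓝 (m * ((-1) ^ n * n.factorial))⁻¹) := by
  have hscale : Tendsto (fun h : ℂ => m * h) (𝓝[≠] 0) (𝓝[≠] 0) := by
    refine tendsto_nhdsWithin_iff.mpr ⟨?_, ?_⟩
    · simpa using ((continuous_const_mul m).tendsto 0).mono_left nhdsWithin_le_nhds
    · filter_upwards [self_mem_nhdsWithin] with h hh using mul_ne_zero hm hh
  have := (tendsto_self_mul_Gamma_sub_natCast n).comp hscale |>.const_mul m⁻¹
  rw [mul_inv]
  refine this.congr fun h => ?_
  simp only [Function.comp_apply]
  field_simp

theorem tendsto_self_mul_Gamma_one_add_mul_sub_natCast {m : ℂ} (hm : m ≠ 0) {k : ℕ} (hk : 1 ≤ k) :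
    Tendsto (fun h : ℂ => h * Gamma (1 + m * h - k)) (𝓝[≠] 0)
      (𝓝 (m * ((-1) ^ (k - 1) * (k - 1).factorial))⁻¹) := by
  obtain ⟨n, rfl⟩ := Nat.exists_eq_add_of_le' hk
  convert tendsto_self_mul_Gamma_mul_sub_natCast hm n using 4 <;> push_cast <;> ring

theorem tendsto_Gamma_one_add_natCast_sub_mul (n : ℕ) (c : ℂ) :
    Tendsto (fun h : ℂ => Gamma (1 + n - c * h)) (𝓝 0) (𝓝 n.factorial) := by
  have hcont : ContinuousAt Gamma (n + 1) :=
    continuousAt_Gamma _ fun m h => by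
      have hre := congrArg re h
      norm_num at hre
      linarith [(m.cast_nonneg : (0 : ℝ) ≤ m), (n.cast_nonneg : (0 : ℝ) ≤ n)]
  have hlin : Tendsto (fun h : ℂ => 1 + n - c * h) (𝓝 0) (𝓝 (n + 1)) :=
    (by fun_prop : Continuous fun h : ℂ => 1 + n - c * h).tendsto' 0 _ (by ring)
  have := hcont.tendsto.comp hlin
  rwa [Gamma_nat_eq_factorial] at this

end Complex

theorem tendsto_div_zpow_sub_two_of_tendsto_one_div_zpow_sub_one {k : ℤ} {f : ℂ → ℂ} {L : ℂ}
    (hf : Tendsto (fun h => 1 / h ^ (k - 1) * f h) (𝓝[≠] 0) (𝓝 L)) :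
    Tendsto (fun h => f h / h ^ (k - 2)) (𝓝[≠] 0) (𝓝 0) := by
  have := hf.mul (tendsto_nhdsWithin_of_tendsto_nhds (tendsto_id (x := 𝓝 (0 : ℂ))))
  rw [mul_zero] at this
  refine this.congr' ?_
  filter_upwards [self_mem_nhdsWithin] with h (hh : h ≠ 0)
  rw [id, show k - 1 = k - 2 + 1 by ring, zpow_add_one₀ hh]
  field_simp

theorem tendsto_one_div_zpow_mul_div_mul_prod {n : ℕ} {a b : ℂ → ℂ} {c : Fin n → ℂ → ℂ}
    {α β : ℂ} {γ : Fin n → ℂ}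
    (ha : Tendsto (fun h => h * a h) (𝓝[≠] 0) (𝓝 α)) (hb : Tendsto b (𝓝[≠] 0) (𝓝 β))
    (hβ : β ≠ 0) (hc : ∀ i, Tendsto (fun h => h * c i h) (𝓝[≠] 0) (𝓝 (γ i)))
    (hγ : ∀ i, γ i ≠ 0) :
    Tendsto (fun h => 1 / h ^ ((n : ℤ) - 1) * (a h / (b h * ∏ i, c i h))) (𝓝[≠] 0)
      (𝓝 (α / β * ∏ i, (γ i)⁻¹)) := by
  refine ((ha.div hb hβ).mul (tendsto_finsetProd _ fun i _ => (hc i).inv₀ (hγ i))).congr' ?_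
  filter_upwards [self_mem_nhdsWithin] with h (hh : h ≠ 0)
  simp only [Pi.div_apply, mul_inv, Finset.prod_mul_distrib, Finset.prod_const, Finset.card_univ,
    Fintype.card_fin, one_div, inv_pow, zpow_sub_one₀ hh, zpow_natCast, Finset.prod_inv_distrib]
  field_simp

theorem weighted_residue_vanishes_to_order_N_minus_one_general
    (N : ℕ) (w : Fin N → ℕ) (hw : ∀ i, 0 < w i)
    (d : ℕ) (hd : 0 < d) (d' : ℕ) (l : ℕ) :
    Tendsto
      (fun h : ℂ => (1 / h ^ ((N : ℤ) - 1)) *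
        (Complex.Gamma (1 + (d : ℂ) * h - (d : ℂ) * ((l : ℂ) + 1)) /
          (Complex.Gamma (1 + (d' : ℂ) * ((l : ℂ) + 1) - (d' : ℂ) * h) *
            ∏ i, Complex.Gamma (1 + (w i : ℂ) * h - (w i : ℂ) * ((l : ℂ) + 1)))))
      (𝓝[≠] (0 : ℂ))
      (𝓝 (((-1 : ℂ) ^ (d * (l + 1) - 1) /
          ((d : ℂ) * (Nat.factorial (d * (l + 1) - 1) : ℂ) *
            (Nat.factorial (d' * (l + 1)) : ℂ))) *
        ∏ i, (-1 : ℂ) ^ (w i * (l + 1) - 1) * (w i : ℂ) *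
          (Nat.factorial (w i * (l + 1) - 1) : ℂ))) ∧
    Tendsto
      (fun h : ℂ =>
        (Complex.Gamma (1 + (d : ℂ) * h - (d : ℂ) * ((l : ℂ) + 1)) /
          (Complex.Gamma (1 + (d' : ℂ) * ((l : ℂ) + 1) - (d' : ℂ) * h) *
            ∏ i, Complex.Gamma (1 + (w i : ℂ) * h - (w i : ℂ) * ((l : ℂ) + 1)))) /
          h ^ ((N : ℤ) - 2))
      (𝓝[≠] (0 : ℂ)) (𝓝 (0 : ℂ)) := by
  have hcast (m : ℕ) : (m : ℂ) * ((l : ℂ) + 1) = ((m * (l + 1) : ℕ) : ℂ) := by push_cast; rfl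
  have hpole {m : ℕ} (hm : 0 < m) :=
    Complex.tendsto_self_mul_Gamma_one_add_mul_sub_natCast (k := m * (l + 1))
      (Nat.cast_ne_zero.mpr hm.ne') (Nat.one_le_iff_ne_zero.mpr (by positivity))
  simp only [hcast]
  have hlim := tendsto_one_div_zpow_mul_div_mul_prod (hpole hd)
    ((Complex.tendsto_Gamma_one_add_natCast_sub_mul (d' * (l + 1)) d').mono_left nhdsWithin_le_nhds)
    (Nat.cast_ne_zero.mpr (Nat.factorial_ne_zero _)) (fun i => hpole (hw i))
    (fun i => inv_ne_zero (by simp [(hw i).ne', Nat.factorial_ne_zero]))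
  refine ⟨hlim.trans_eq ?_, tendsto_div_zpow_sub_two_of_tendsto_one_div_zpow_sub_one hlim⟩
  simp only [mul_inv, inv_inv, ← inv_pow, inv_neg_one]
  ring_nf

/-- Let `N ≥ 1`, let `w₁,…,w_N`, `d` be positive integers, `d' = Σ wᵢ - d ≥ 1`,
and `l : ℕ`. Then as `h → 0`, `h ≠ 0`,
`(1/h^(N-1)) · Γ(1 + d·h - d(l+1)) / (Γ(1 + d'(l+1) - d'·h) · ∏ᵢ Γ(1 + wᵢ·h - wᵢ(l+1)))`
tends to `[(-1)^(d(l+1)-1)/(d·(d(l+1)-1)!·(d'(l+1))!)] · ∏ᵢ (-1)^(wᵢ(l+1)-1)·wᵢ·(wᵢ(l+1)-1)!`;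
in particular the same expression divided by `h^(N-2)` tends to `0`. -/
theorem weighted_residue_vanishes_to_order_N_minus_one
    (N : ℕ) (hN : 1 ≤ N) (w : Fin N → ℕ) (hw : ∀ i, 0 < w i)
    (d : ℕ) (hd : 0 < d) (d' : ℕ) (hd' : 1 ≤ d') (hsum : d' + d = ∑ i, w i) (l : ℕ) :
    Tendsto
      (fun h : ℂ => (1 / h ^ ((N : ℤ) - 1)) *
        (Complex.Gamma (1 + (d : ℂ) * h - (d : ℂ) * ((l : ℂ) + 1)) /
          (Complex.Gamma (1 + (d' : ℂ) * ((l : ℂ) + 1) - (d' : ℂ) * h) *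
            ∏ i, Complex.Gamma (1 + (w i : ℂ) * h - (w i : ℂ) * ((l : ℂ) + 1)))))
      (𝓝[≠] (0 : ℂ))
      (𝓝 (((-1 : ℂ) ^ (d * (l + 1) - 1) /
          ((d : ℂ) * (Nat.factorial (d * (l + 1) - 1) : ℂ) *
            (Nat.factorial (d' * (l + 1)) : ℂ))) *
        ∏ i, (-1 : ℂ) ^ (w i * (l + 1) - 1) * (w i : ℂ) *
          (Nat.factorial (w i * (l + 1) - 1) : ℂ))) ∧
    Tendsto
      (fun h : ℂ =>
        (Complex.Gamma (1 + (d : ℂ) * h - (d : ℂ) * ((l : ℂ) + 1)) /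
          (Complex.Gamma (1 + (d' : ℂ) * ((l : ℂ) + 1) - (d' : ℂ) * h) *
            ∏ i, Complex.Gamma (1 + (w i : ℂ) * h - (w i : ℂ) * ((l : ℂ) + 1)))) /
          h ^ ((N : ℤ) - 2))
      (𝓝[≠] (0 : ℂ)) (𝓝 (0 : ℂ)) :=
  weighted_residue_vanishes_to_order_N_minus_one_general N w hw d hd d' l
end

section
/- In the Laurent polynomial ring in three variables over ℚ (the monoid algebra of ℤ³), let f = x + y + z + (xyz)^{-1}, i.e. f is the sum of the monomials with exponent vectors (1,0,0), (0,1,0), (0,0,1) and (-1,-1,-1). Then for every natural number n, the constant term (the coefficient of the zero exponent vector) of f^n equals (4d)!/(d!)⁴ if n = 4d for some natural number d, and equals 0 if n is not divisible by 4. -/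
/-!
Expanding `(x + y + z + (xyz)⁻¹)^n` by the multinomial theorem, the term indexed by
`k : Fin 4 → ℕ` is the monomial with exponent `(k₀ - k₃, k₁ - k₃, k₂ - k₃)` and coefficient
`multinomial k`. It is constant exactly when the four exponents agree, which forces `n = 4d` and
`k = (d, d, d, d)`, contributing `(4d)! / (d!)⁴`.
-/

/-- The Laurent polynomial `f = x + y + z + (xyz)⁻¹` in the Laurent polynomial ring in three
variables over `ℚ`, i.e. the monoid algebra of `ℤ³` over `ℚ`. -/
noncomputable def mirrorP3 : AddMonoidAlgebra ℚ (Fin 3 → ℤ) :=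
  AddMonoidAlgebra.single ![1, 0, 0] 1 + AddMonoidAlgebra.single ![0, 1, 0] 1 +
    AddMonoidAlgebra.single ![0, 0, 1] 1 + AddMonoidAlgebra.single ![-1, -1, -1] 1

open Finset

theorem AddMonoidAlgebra.coeff_sum_single_one_pow {R G ι : Type*} [CommSemiring R]
    [AddCommMonoid G] [DecidableEq ι] [DecidableEq G] (s : Finset ι) (v : ι → G) (n : ℕ)
    (g : G) :
    ((∑ i ∈ s, single (v i) (1 : R)) ^ n).coeff g =
      ∑ k ∈ s.piAntidiag n with ∑ i ∈ s, k i • v i = g, (Nat.multinomial s k : R) := by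
  rw [sum_pow_eq_sum_piAntidiag, coeff_sum, Finsupp.finsetSum_apply, sum_filter]
  refine sum_congr rfl fun k _ => ?_
  simp only [single_pow, one_pow, prod_single, prod_const_one, natCast_def, single_mul_single,
    zero_add, mul_one, coeff_single, Finsupp.single_apply]

theorem Nat.multinomial_const_mul_factorial_pow {ι : Type*} (s : Finset ι) (d : ℕ) :
    Nat.multinomial s (fun _ => d) * d.factorial ^ s.card = (s.card * d).factorial := by
  simpa [mul_comm] using Nat.multinomial_spec s (fun _ => d)

theorem Finset.filter_piAntidiag_univ_forall_eq {ι : Type*} [Fintype ι] [DecidableEq ι]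
    [DecidablePred fun k : ι → ℕ => ∀ i j, k i = k j] (n : ℕ) :
    {k ∈ (univ : Finset ι).piAntidiag n | ∀ i j, k i = k j} =
      if Fintype.card ι ∣ n then {fun _ => n / Fintype.card ι} else ∅ := by
  have const_of_forall_eq {k : ι → ℕ} (hk : ∀ i j, k i = k j) : ∃ c, k = fun _ => c := by
    cases isEmpty_or_nonempty ι with
    | inl _ => exact ⟨0, funext isEmptyElim⟩
    | inr h =>
      obtain ⟨i₀⟩ := h
      exact ⟨k i₀, funext fun i => hk i i₀⟩
  ext k
  simp only [mem_filter, mem_piAntidiag, mem_univ, implies_true, and_true]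
  split_ifs with hdvd
  · rw [mem_singleton]
    constructor
    · rintro ⟨hsum, hk⟩
      obtain ⟨c, rfl⟩ := const_of_forall_eq hk
      rcases isEmpty_or_nonempty ι with _ | _
      · exact Subsingleton.elim _ _
      · rw [sum_const, card_univ, smul_eq_mul] at hsum
        rw [← hsum, Nat.mul_div_cancel_left _ Fintype.card_pos]
    · rintro rfl
      simp [Nat.mul_div_cancel' hdvd]
  · simp only [notMem_empty, iff_false, not_and]
    intro hsum hk
    obtain ⟨c, rfl⟩ := const_of_forall_eq hk
    exact hdvd ⟨c, by simpa using hsum.symm⟩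

def mirrorP3Exponent : Fin 4 → Fin 3 → ℤ :=
  ![![1, 0, 0], ![0, 1, 0], ![0, 0, 1], ![-1, -1, -1]]

theorem mirrorP3_eq_sum_single :
    mirrorP3 = ∑ i, AddMonoidAlgebra.single (mirrorP3Exponent i) 1 := by
  simp [mirrorP3, mirrorP3Exponent, Fin.sum_univ_four]

theorem sum_nsmul_mirrorP3Exponent_eq_zero_iff (k : Fin 4 → ℕ) :
    ∑ i, k i • mirrorP3Exponent i = 0 ↔ ∀ i j, k i = k j := by
  have hsum : ∑ i, k i • mirrorP3Exponent i =
      ![(k 0 : ℤ) - k 3, (k 1 : ℤ) - k 3, (k 2 : ℤ) - k 3] := by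
    funext j
    fin_cases j <;> simp [mirrorP3Exponent, Fin.sum_univ_four] <;> ring
  rw [hsum]
  simp [funext_iff, Fin.forall_fin_succ]
  omega

theorem coeff_zero_mirrorP3_pow (n : ℕ) :
    (mirrorP3 ^ n).coeff 0 =
      if 4 ∣ n then (Nat.multinomial univ (fun _ : Fin 4 => n / 4) : ℚ) else 0 := by
  rw [mirrorP3_eq_sum_single, AddMonoidAlgebra.coeff_sum_single_one_pow,
    filter_congr fun k _ => sum_nsmul_mirrorP3Exponent_eq_zero_iff k,
    filter_piAntidiag_univ_forall_eq, Fintype.card_fin]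
  split_ifs <;> simp

/-- The constant term of `f^n`, where `f = x + y + z + (xyz)⁻¹`, equals
`(4d)!/(d!)⁴` if `n = 4d`, and equals `0` if `4 ∤ n`. -/
theorem constant_term_powers_mirrorP3 (n : ℕ) :
    (∀ d : ℕ, n = 4 * d →
      (mirrorP3 ^ n).coeff 0 = (Nat.factorial (4 * d) : ℚ) / (Nat.factorial d : ℚ) ^ 4) ∧
    (¬ (4 ∣ n) → (mirrorP3 ^ n).coeff 0 = 0) := by
  refine ⟨fun d hn => ?_, fun hn => by rw [coeff_zero_mirrorP3_pow, if_neg hn]⟩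
  have hfactorial := Nat.multinomial_const_mul_factorial_pow (univ : Finset (Fin 4)) d
  rw [card_univ, Fintype.card_fin] at hfactorial
  rw [coeff_zero_mirrorP3_pow, if_pos ⟨d, hn⟩, hn, Nat.mul_div_cancel_left d four_pos,
    eq_div_iff (by positivity)]
  exact_mod_cast hfactorial
end

section
/- For every h ∈ ℂ and every q ∈ ℂ with |q| < 1/27, the family indexed by d ∈ ℕ with terms q^d · Γ(1 + 3h + 3d) · (Γ(1 + h + d))^{-4} · (Γ(1 - h - d))^{-1} is summable (i.e., the series Σ_{d≥0} q^d Γ(1+3h+3d)/(Γ(1+h+d)⁴ Γ(1-h-d)) converges absolutely). -/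
/-!
Ratio test. For `d` with `0 < re (h + d)`, the Gamma recurrence gives
`a (d + 1) = r d * a d` with `r d = q (3d+1+3h)(3d+2+3h)(3d+3+3h)(-h-d) / (d+1+h)⁴ → -27 q`.
The factor `1 / Γ(1 - h - d)` obeys `1 / Γ s = s / Γ (s + 1)` even at the poles of `Γ`, so there
is no need to treat integral `h`, where the terms vanish from some point on, separately.
-/

open Filter Topology Complex

theorem summable_of_ratio_norm_eventually_le_of_tendsto_lt_one {E : Type*}
    [SeminormedAddCommGroup E] [CompleteSpace E] {f : ℕ → E} {ρ : ℕ → ℝ} {l : ℝ} (hl : l < 1)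
    (hρ : Tendsto ρ atTop (𝓝 l)) (hf : ∀ᶠ n in atTop, ‖f (n + 1)‖ ≤ ρ n * ‖f n‖) :
    Summable f := by
  obtain ⟨r, hlr, hr⟩ := exists_between hl
  refine summable_of_ratio_norm_eventually_le hr ?_
  filter_upwards [hf, hρ.eventually (eventually_le_nhds hlr)] with n hfn hρn
  exact hfn.trans (mul_le_mul_of_nonneg_right hρn (norm_nonneg _))

theorem Complex.Gamma_add_three {s : ℂ} (hs : 0 < s.re) :
    Gamma (s + 3) = s * (s + 1) * (s + 2) * Gamma s := by
  have h₀ : s ≠ 0 := ne_zero_of_re_pos hs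
  have h₁ : s + 1 ≠ 0 := ne_zero_of_re_pos (by simp; linarith)
  have h₂ : s + 2 ≠ 0 := ne_zero_of_re_pos (by simp; linarith)
  rw [show s + 3 = s + 2 + 1 by ring, Gamma_add_one _ h₂, show s + 2 = s + 1 + 1 by ring,
    Gamma_add_one _ h₁, Gamma_add_one _ h₀]
  ring

section LocalIFunction

variable (h q : ℂ)

noncomputable def localITerm (d : ℕ) : ℂ :=
  q ^ d * Gamma (1 + 3 * h + 3 * d) / (Gamma (1 + h + d) ^ 4 * Gamma (1 - h - d))

noncomputable def localIRatio (d : ℕ) : ℂ :=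
  q * ((1 + 3 * h + 3 * d) / (1 + h + d)) * ((2 + 3 * h + 3 * d) / (1 + h + d)) *
    ((3 + 3 * h + 3 * d) / (1 + h + d)) * ((-h - d) / (1 + h + d))

variable {h} in
theorem localITerm_succ {d : ℕ} (hd : 0 < (h + d).re) :
    localITerm h q (d + 1) = localIRatio h q d * localITerm h q d := by
  have hA : 0 < (1 + 3 * h + 3 * d).re := by simp at hd ⊢; linarith
  have hB : 1 + h + d ≠ 0 := ne_zero_of_re_pos (by simp at hd ⊢; linarith)
  have hΓA : Gamma (1 + 3 * h + 3 * (d + 1 : ℕ)) =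
      (1 + 3 * h + 3 * d) * (2 + 3 * h + 3 * d) * (3 + 3 * h + 3 * d) *
        Gamma (1 + 3 * h + 3 * d) := by
    rw [show 1 + 3 * h + 3 * (d + 1 : ℕ) = 1 + 3 * h + 3 * d + 3 by push_cast; ring,
      Gamma_add_three hA]
    ring
  have hΓB : Gamma (1 + h + (d + 1 : ℕ)) = (1 + h + d) * Gamma (1 + h + d) := by
    rw [show 1 + h + (d + 1 : ℕ) = 1 + h + d + 1 by push_cast; ring, Gamma_add_one _ hB]
  have hΓC : (Gamma (1 - h - (d + 1 : ℕ)))⁻¹ = (-h - d) * (Gamma (1 - h - d))⁻¹ := by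
    rw [one_div_Gamma_eq_self_mul_one_div_Gamma_add_one]
    push_cast
    ring_nf
  simp only [localITerm, localIRatio, div_eq_mul_inv, mul_inv, hΓA, hΓB, hΓC]
  field_simp
  ring

theorem tendsto_localIRatio : Tendsto (localIRatio h q) atTop (𝓝 (-27 * q)) := by
  have hlim (a c : ℂ) : Tendsto (fun d : ℕ ↦ (a + c * d) / (1 + h + d)) atTop (𝓝 c) := by
    simpa using tendsto_add_mul_div_add_mul_atTop_nhds a (1 + h) c one_ne_zero
  have hprod := (((tendsto_const_nhds (x := q)).mul (hlim (1 + 3 * h) 3)).mul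
    (hlim (2 + 3 * h) 3)).mul (hlim (3 + 3 * h) 3) |>.mul (hlim (-h) (-1))
  convert hprod using 2 with d
  · simp only [localIRatio]
    ring
  · ring

end LocalIFunction

/-- For every `h : ℂ` and `q : ℂ` with `|q| < 1/27`, the series
`Σ_{d≥0} q^d Γ(1+3h+3d) / (Γ(1+h+d)⁴ Γ(1-h-d))` converges absolutely. -/
theorem summable_local_I_function_KS (h q : ℂ) (hq : ‖q‖ < 1 / 27) :
    Summable (fun d : ℕ =>
      q ^ d * Complex.Gamma (1 + 3 * h + 3 * (d : ℂ)) /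
        (Complex.Gamma (1 + h + (d : ℂ)) ^ 4 * Complex.Gamma (1 - h - (d : ℂ)))) := by
  change Summable (localITerm h q)
  refine summable_of_ratio_norm_eventually_le_of_tendsto_lt_one (l := 27 * ‖q‖) (by linarith)
    (by simpa using (tendsto_localIRatio h q).norm) ?_
  filter_upwards [tendsto_natCast_atTop_atTop.eventually_gt_atTop (-h.re)] with d hd
  rw [localITerm_succ q (by simp; linarith), norm_mul]
end
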